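/- arXiv:2205.05098 — 6 statements merged into one kernel-verified Lean document; each statement's English description precedes it below -/
import Mathlib

section
/- Let G = (V, E) be a finite simple graph with independence number α(G) < |V| and xi number Ξ(G). Then for every subset S ⊆ V of vertices, |S| − e(S)/Ξ(G) ≤ α(G), where e(S) denotes the number of edges of G having both endpoints in S. -/
open scoped Classical

/-- The independence number of a finite simple graph: the largest cardinality of a
set of pairwise nonadjacent vertices. -/
noncomputable def indepNum {V : Type*} [Fintype V] (G : SimpleGraph V) : ℕ :=
  sSup {n | ∃ s : Finset V, (∀ u ∈ s, ∀ v ∈ s, u ≠ v → ¬ G.Adj u v) ∧ s.card = n}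

/-- `xiOf G S = max_{v ∈ S} |{u ∈ S : u adjacent to v}|`. -/
noncomputable def xiOf {V : Type*} [Fintype V] (G : SimpleGraph V) (S : Finset V) : ℕ :=
  S.sup fun v => (S.filter fun u => G.Adj u v).card

/-- The xi number of a graph: the minimum of `xiOf G S` over all vertex subsets `S`
with `|S| = α(G) + 1`. -/
noncomputable def xiNum {V : Type*} [Fintype V] (G : SimpleGraph V) : ℕ :=
  sInf {k | ∃ S : Finset V, S.card = indepNum G + 1 ∧ xiOf G S = k}

/-!
Peel off vertices. While `|S| > α(G)`, pick `T ⊆ S` with `|T| = α(G) + 1` and a vertex `v`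
of maximal degree inside `T`: it has at least `Ξ(T) ≥ Ξ(G)` neighbours in `S`, so deleting it
lowers `|S|` by one and `e(S)` by at least `Ξ(G)`. Hence `Ξ(G) |S| ≤ Ξ(G) α(G) + e(S)`, and
`Ξ(G) ≥ 1` because a set of `α(G) + 1` vertices cannot be independent.
-/

open Finset

namespace SimpleGraph

variable {V : Type*} (G : SimpleGraph V)

noncomputable def degIn (S : Finset V) (v : V) : ℕ :=
  #(S.filter fun u => G.Adj u v)

lemma degIn_mono {S T : Finset V} (h : S ⊆ T) (v : V) : G.degIn S v ≤ G.degIn T v :=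
  card_le_card (filter_subset_filter _ h)

variable [Fintype V]

noncomputable def edgesIn (S : Finset V) : Finset (Sym2 V) :=
  G.edgeFinset.filter fun e => ∀ x ∈ e, x ∈ S

lemma edgesIn_mono {S T : Finset V} (h : S ⊆ T) : G.edgesIn S ⊆ G.edgesIn T :=
  monotone_filter_right _ fun _ _ he x hx => h (he x hx)

lemma card_edgesIn_erase_add_degIn_le {S : Finset V} {v : V} (hv : v ∈ S) :
    #(G.edgesIn (S.erase v)) + G.degIn S v ≤ #(G.edgesIn S) := by
  have hsub : (S.filter fun u => G.Adj u v).image (s(·, v)) ⊆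
      G.edgesIn S \ G.edgesIn (S.erase v) := by
    intro e he
    obtain ⟨u, hu, rfl⟩ := mem_image.mp he
    obtain ⟨huS, huv⟩ := mem_filter.mp hu
    simp only [edgesIn, mem_sdiff, mem_filter, mem_edgeFinset, Sym2.mem_iff, forall_eq_or_imp,
      forall_eq, mem_erase]
    exact ⟨⟨huv, huS, hv⟩, fun h => h.2.2.1 rfl⟩
  have hinj : Function.Injective (s(·, v)) := fun _ _ h => Sym2.congr_left.mp h
  calc #(G.edgesIn (S.erase v)) + G.degIn S v
      ≤ #(G.edgesIn (S.erase v)) + #(G.edgesIn S \ G.edgesIn (S.erase v)) := by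
        rw [degIn, ← card_image_of_injective _ hinj]
        exact Nat.add_le_add_left (card_le_card hsub) _
    _ = #(G.edgesIn S) := by
        rw [add_comm, card_sdiff_add_card_eq_card (G.edgesIn_mono (erase_subset v S))]

theorem card_mul_le_of_exists_degIn_ge {m k : ℕ}
    (h : ∀ T : Finset V, m < #T → ∃ v ∈ T, k ≤ G.degIn T v) (S : Finset V) :
    #S * k ≤ m * k + #(G.edgesIn S) := by
  induction S using Finset.strongInduction with
  | H S ih =>
    by_cases hS : #S ≤ m
    · exact le_add_right (Nat.mul_le_mul_right k hS)
    obtain ⟨v, hv, hk⟩ := h S (not_le.mp hS)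
    have hrec := ih (S.erase v) (erase_ssubset hv)
    have hcount := G.card_edgesIn_erase_add_degIn_le hv
    rw [← card_erase_add_one hv, add_mul, one_mul]
    omega

end SimpleGraph

section XiNumber

variable {V : Type*} [Fintype V] (G : SimpleGraph V)

lemma card_le_indepNum {s : Finset V} (hs : ∀ u ∈ s, ∀ v ∈ s, u ≠ v → ¬ G.Adj u v) :
    #s ≤ indepNum G :=
  le_csSup ⟨Fintype.card V, fun _ ⟨t, _, ht⟩ => ht ▸ t.card_le_univ⟩ ⟨s, hs, rfl⟩

lemma card_le_indepNum_of_xiOf_eq_zero {S : Finset V} (h : xiOf G S = 0) :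
    #S ≤ indepNum G := by
  refine card_le_indepNum G fun u hu v hv _ huv => ?_
  have hdeg : G.degIn S v = 0 := (Finset.sup_eq_bot_iff _ S).mp h v hv
  exact (card_pos.mpr ⟨u, mem_filter.mpr ⟨hu, huv⟩⟩).ne' hdeg

lemma xiNum_pos (hα : indepNum G < Fintype.card V) : 0 < xiNum G := by
  refine Nat.pos_of_ne_zero fun h => ?_
  rcases Nat.sInf_eq_zero.mp h with ⟨S, hS, h0⟩ | hempty
  · have := card_le_indepNum_of_xiOf_eq_zero G h0
    omega
  · obtain ⟨T, -, hT⟩ := exists_subset_card_eq (s := (univ : Finset V)) (n := indepNum G + 1)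
      (by rwa [card_univ])
    exact hempty.subset ⟨T, hT, rfl⟩

lemma xiNum_le_xiOf {T : Finset V} (hT : #T = indepNum G + 1) : xiNum G ≤ xiOf G T :=
  Nat.sInf_le ⟨T, hT, rfl⟩

lemma exists_xiNum_le_degIn {S : Finset V} (hS : indepNum G < #S) :
    ∃ v ∈ S, xiNum G ≤ G.degIn S v := by
  obtain ⟨T, hTS, hT⟩ := exists_subset_card_eq (Nat.succ_le_of_lt hS)
  obtain ⟨v, hv, hsup⟩ := exists_mem_eq_sup T (card_pos.mp (by omega)) (G.degIn T)
  refine ⟨v, hTS hv, ?_⟩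
  calc xiNum G ≤ xiOf G T := xiNum_le_xiOf G hT
    _ = G.degIn T v := hsup
    _ ≤ G.degIn S v := G.degIn_mono hTS v

end XiNumber

/-- for every subset `S` of vertices,
`|S| − e(S)/Ξ(G) ≤ α(G)`, where `e(S)` is the number of edges of `G` with both
endpoints in `S`. -/
theorem stmt_0 {V : Type*} [Fintype V] (G : SimpleGraph V)
    (hα : indepNum G < Fintype.card V) (S : Finset V) :
    (S.card : ℝ) -
      (G.edgeFinset.filter fun e => ∀ x ∈ e, x ∈ S).card / (xiNum G : ℝ)
      ≤ indepNum G := by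
  have hxi : (0 : ℝ) < xiNum G := by exact_mod_cast xiNum_pos G hα
  have hcount : #S * xiNum G ≤ indepNum G * xiNum G + #(G.edgesIn S) :=
    G.card_mul_le_of_exists_degIn_ge (fun _ hT => exists_xiNum_le_degIn G hT) S
  rw [sub_le_iff_le_add, add_div' _ _ _ hxi.ne', le_div_iff₀ hxi]
  exact_mod_cast hcount
end

section
/- (Theorem 1, deterministic LHV bound.) Let G = (V, E) be a finite simple graph with independence number α(G) < |V| and xi number Ξ(G). Then for all functions a, b : V → {0, 1}, Σ_{i ∈ V} a(i)·b(i) − (1/(2·Ξ(G))) · Σ_{{i,j} ∈ E} (a(i)·b(j) + a(j)·b(i)) ≤ α(G). -/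
open scoped Classical

/-!
With `T` the set of vertices where `a = b = 1`, the diagonal sum is `|T|` and every edge inside
`T` contributes `2` to the edge sum, so it suffices to show `Ξ(G) (|T| - α(G)) ≤ e(T)`, the
number of edges inside `T`. While `|T| > α(G)`, some `(α(G) + 1)`-subset of `T` has a vertex of
degree at least `Ξ(G)` in it, hence in `T`; deleting that vertex removes at least `Ξ(G)` edges,
and induction on `|T|` finishes.
-/

open Finset

section Graph

variable {V : Type*} [Fintype V] (G : SimpleGraph V)

lemma exists_adj_of_indepNum_lt_card {S : Finset V} (hS : indepNum G < #S) :
    ∃ u ∈ S, ∃ v ∈ S, G.Adj u v := by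
  by_contra! h
  exact (card_le_indepNum G fun u hu v hv _ => h u hu v hv).not_gt hS

lemma one_le_xiOf {S : Finset V} (hS : indepNum G < #S) : 1 ≤ xiOf G S := by
  obtain ⟨u, hu, v, hv, huv⟩ := exists_adj_of_indepNum_lt_card G hS
  calc 1 ≤ #{w ∈ S | G.Adj w v} := card_pos.mpr ⟨u, mem_filter.mpr ⟨hu, huv⟩⟩
    _ ≤ xiOf G S := le_sup (f := fun v => #{w ∈ S | G.Adj w v}) hv

lemma one_le_xiNum (h : indepNum G < Fintype.card V) : 1 ≤ xiNum G := by
  obtain ⟨S, -, hS⟩ := exists_subset_card_eq (s := (univ : Finset V)) (n := indepNum G + 1)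
    (by simpa using h)
  exact le_csInf ⟨_, S, hS, rfl⟩ fun k ⟨S', hS', hk⟩ => hk ▸ one_le_xiOf G (by omega)

lemma exists_xiNum_le_card_adj {T : Finset V} (hT : indepNum G < #T) :
    ∃ v ∈ T, xiNum G ≤ #{u ∈ T | G.Adj u v} := by
  obtain ⟨S, hST, hS⟩ := exists_subset_card_eq (n := indepNum G + 1) hT
  have hS_ne : S.Nonempty := card_pos.mp (by omega)
  obtain ⟨v, hv, hsup⟩ := exists_mem_eq_sup S hS_ne fun v => #{u ∈ S | G.Adj u v}
  refine ⟨v, hST hv, ?_⟩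
  calc xiNum G ≤ xiOf G S := Nat.sInf_le ⟨S, hS, rfl⟩
    _ = #{u ∈ S | G.Adj u v} := hsup
    _ ≤ #{u ∈ T | G.Adj u v} := card_le_card (filter_subset_filter _ hST)

lemma card_edges_erase_add_card_adj_le {T : Finset V} {v : V} (hv : v ∈ T) :
    #(G.edgeFinset ∩ (T.erase v).sym2) + #{u ∈ T | G.Adj u v} ≤ #(G.edgeFinset ∩ T.sym2) := by
  set star := image (fun u => s(u, v)) {u ∈ T | G.Adj u v}
  have hstar : #star = #{u ∈ T | G.Adj u v} :=
    card_image_of_injective _ fun _ _ h => Sym2.congr_left.mp h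
  have hdisj : Disjoint (G.edgeFinset ∩ (T.erase v).sym2) star := by
    refine disjoint_left.mpr fun e he he' => ?_
    obtain ⟨u, -, rfl⟩ := mem_image.mp he'
    exact notMem_erase v T (mem_sym2_iff.mp (mem_inter.mp he).2 v (Sym2.mem_mk_right u v))
  have hsub : G.edgeFinset ∩ (T.erase v).sym2 ∪ star ⊆ G.edgeFinset ∩ T.sym2 := by
    refine union_subset (inter_subset_inter_left (sym2_mono (erase_subset v T))) ?_
    intro e he
    obtain ⟨u, hu, rfl⟩ := mem_image.mp he
    rw [mem_filter] at hu
    simp [hu.1, hu.2, hv]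
  rw [← hstar, ← card_union_of_disjoint hdisj]
  exact card_le_card hsub

lemma xiNum_mul_card_le (T : Finset V) :
    xiNum G * #T ≤ xiNum G * indepNum G + #(G.edgeFinset ∩ T.sym2) := by
  induction T using Finset.strongInduction with
  | H T ih =>
    rcases le_or_gt #T (indepNum G) with hT | hT
    · exact le_add_right (Nat.mul_le_mul_left _ hT)
    obtain ⟨v, hv, hdeg⟩ := exists_xiNum_le_card_adj G hT
    have ih' := ih (T.erase v) (erase_ssubset hv)
    have hstep := card_edges_erase_add_card_adj_le G hv
    rw [← card_erase_add_one hv, Nat.mul_add_one]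
    omega

end Graph

section BellFunctional

variable {V : Type*}

lemma sum_mul_eq_card_filter [Fintype V] {a b : V → ℝ} (ha : ∀ i, a i = 0 ∨ a i = 1)
    (hb : ∀ i, b i = 0 ∨ b i = 1) :
    ∑ i, a i * b i = #{i | a i = 1 ∧ b i = 1} := by
  rw [natCast_card_filter]
  refine sum_congr rfl fun i _ => ?_
  rcases ha i with h | h <;> rcases hb i with h' | h' <;> simp [h, h']

lemma two_mul_card_inter_sym2_le_sum (E : Finset (Sym2 V)) {T : Finset V} {a b : V → ℝ}
    (ha : ∀ i, 0 ≤ a i) (hb : ∀ i, 0 ≤ b i) (hT : ∀ i ∈ T, a i = 1 ∧ b i = 1) :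
    2 * (#(E ∩ T.sym2) : ℝ) ≤
      ∑ e ∈ E, Sym2.lift ⟨fun i j => a i * b j + a j * b i, fun i j => by ring⟩ e := by
  set f := Sym2.lift ⟨fun i j => a i * b j + a j * b i, fun i j => by ring⟩
  have hf_nonneg : ∀ e, 0 ≤ f e := Sym2.ind fun i j => by
    simp only [f, Sym2.lift_mk]
    exact add_nonneg (mul_nonneg (ha i) (hb j)) (mul_nonneg (ha j) (hb i))
  have hf_two : ∀ e ∈ E ∩ T.sym2, 2 ≤ f e := by
    intro e he
    induction e using Sym2.ind with
    | _ i j =>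
      obtain ⟨hi, hj⟩ := mk_mem_sym2_iff.mp (mem_inter.mp he).2
      norm_num [f, (hT i hi).1, (hT i hi).2, (hT j hj).1, (hT j hj).2]
  calc 2 * (#(E ∩ T.sym2) : ℝ) ≤ ∑ e ∈ E ∩ T.sym2, f e := by
        simpa [mul_comm] using card_nsmul_le_sum _ f 2 hf_two
    _ ≤ ∑ e ∈ E, f e :=
        sum_le_sum_of_subset_of_nonneg inter_subset_left fun e _ _ => hf_nonneg e

end BellFunctional

/-- Theorem 1, deterministic LHV bound: for all `{0,1}`-valued
assignments `a b : V → ℝ`,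
`Σ_{i ∈ V} a i * b i − (1/(2·Ξ(G))) · Σ_{{i,j} ∈ E} (a i * b j + a j * b i) ≤ α(G)`. -/
theorem stmt_1 {V : Type*} [Fintype V] (G : SimpleGraph V)
    (a b : V → ℝ) (ha : ∀ i, a i = 0 ∨ a i = 1) (hb : ∀ i, b i = 0 ∨ b i = 1) :
    ∑ i, a i * b i -
      (1 / (2 * (xiNum G : ℝ))) *
        ∑ e ∈ G.edgeFinset,
          Sym2.lift ⟨fun i j => a i * b j + a j * b i, fun i j => by ring⟩ e
      ≤ indepNum G := by
  set T : Finset V := {i | a i = 1 ∧ b i = 1}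
  set F := ∑ e ∈ G.edgeFinset,
    Sym2.lift ⟨fun i j => a i * b j + a j * b i, fun i j => by ring⟩ e
  have hF : 2 * (#(G.edgeFinset ∩ T.sym2) : ℝ) ≤ F :=
    two_mul_card_inter_sym2_le_sum _ (fun i => by rcases ha i with h | h <;> simp [h])
      (fun i => by rcases hb i with h | h <;> simp [h]) fun i hi => (mem_filter.mp hi).2
  rw [sum_mul_eq_card_filter ha hb, one_div_mul_eq_div]
  rcases le_or_gt #T (indepNum G) with hT | hT
  · have : 0 ≤ F / (2 * xiNum G) := div_nonneg (by linarith) (by positivity)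
    have : (#T : ℝ) ≤ indepNum G := by exact_mod_cast hT
    linarith
  have hΞ : (1 : ℝ) ≤ xiNum G := by exact_mod_cast one_le_xiNum G (hT.trans_le T.card_le_univ)
  have hkey : (xiNum G * #T : ℝ) ≤ xiNum G * indepNum G + #(G.edgeFinset ∩ T.sym2) := by
    exact_mod_cast xiNum_mul_card_le G T
  have : (#T : ℝ) - indepNum G ≤ F / (2 * xiNum G) := by
    rw [le_div_iff₀ (by positivity)]
    linarith
  linarith
end

section
/- (Theorem 2.) Let G = (V, E) be a finite simple graph with independence number α(G) < |V| and xi number Ξ(G). Let d ≥ 1 and let v : V → (Fin d → ℂ) be an orthonormal representation of G in ℂ^d, i.e., each v_i is a unit vector and ⟨v_i, v_j⟩ = 0 whenever i and j are adjacent. Let ψ : Fin d × Fin d → ℂ be given by ψ(k,l) = 1/√d if k = l and 0 otherwise, and for i, j ∈ V set P(i, j) = |⟨v_i ⊗ v̄_j, ψ⟩|², where v_i ⊗ v̄_j is the vector (k, l) ↦ v_i(k)·conj(v_j(l)). Then Σ_{i ∈ V} P(i, i) − (1/(2·Ξ(G))) · Σ_{{i,j} ∈ E} (P(i, j) + P(j,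 i)) = |V| / d. -/
open scoped Classical
open ComplexConjugate

/-! Pairing `x ⊗ ȳ` with the maximally entangled state `ψ` gives `⟨x, y⟩ / √d`, so
`P i j = |⟨v_i, v_j⟩|² / d`. Hence `P i i = 1 / d` by normalisation, while `P i j = 0`
along every edge by orthogonality: the edge term of the functional vanishes and the
diagonal sums to `|V| / d`. -/

theorem sum_conj_kron_mul_diagonal {ι : Type*} [Fintype ι] [DecidableEq ι]
    (c : ℂ) (x y : ι → ℂ) :
    ∑ p : ι × ι, conj (x p.1 * conj (y p.2)) * (if p.1 = p.2 then c else 0)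
      = c * ∑ k, conj (x k) * y k := by
  rw [Fintype.sum_prod_type, Finset.mul_sum]
  refine Finset.sum_congr rfl fun k _ => ?_
  rw [Finset.sum_eq_single k (fun l _ hl => by simp [Ne.symm hl]) (by simp)]
  simp only [if_pos, map_mul, Complex.conj_conj]
  ring

theorem norm_ofReal_inv_sqrt_mul_sq {r : ℝ} (hr : 0 ≤ r) (z : ℂ) :
    ‖((1 / Real.sqrt r : ℝ) : ℂ) * z‖ ^ 2 = ‖z‖ ^ 2 / r := by
  rw [norm_mul, Complex.norm_real, Real.norm_of_nonneg (by positivity), mul_pow, div_pow,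
    one_pow, Real.sq_sqrt hr, one_div_mul_eq_div]

theorem SimpleGraph.sum_edgeFinset_lift_eq_zero {V M : Type*} [AddCommMonoid M]
    (G : SimpleGraph V) [Fintype G.edgeSet] (f : {f : V → V → M // ∀ a b, f a b = f b a})
    (hf : ∀ i j, G.Adj i j → f.1 i j = 0) :
    ∑ e ∈ G.edgeFinset, Sym2.lift f e = 0 := by
  refine Finset.sum_eq_zero fun e he => ?_
  induction e using Sym2.ind with
  | _ i j => exact hf i j (G.mem_edgeFinset.mp he)

/-- Theorem 2: for an orthonormal representation `v` of `G` in `ℂ^d`,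
the quantum value of the graph Bell functional on the maximally entangled state is
`|V| / d`. -/
theorem stmt_3 {V : Type*} [Fintype V] (G : SimpleGraph V)
    (d : ℕ) (v : V → Fin d → ℂ)
    (hunit : ∀ i, ∑ k, conj (v i k) * v i k = 1)
    (horth : ∀ i j, G.Adj i j → ∑ k, conj (v i k) * v j k = 0)
    (ψ : Fin d × Fin d → ℂ)
    (hψ : ∀ p : Fin d × Fin d, ψ p = if p.1 = p.2 then ((1 / Real.sqrt d : ℝ) : ℂ) else 0)
    (P : V → V → ℝ)
    (hP : ∀ i j, P i j =
      ‖∑ p : Fin d × Fin d, conj (v i p.1 * conj (v j p.2)) * ψ p‖ ^ 2) :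
    ∑ i, P i i -
      (1 / (2 * (xiNum G : ℝ))) *
        ∑ e ∈ G.edgeFinset, Sym2.lift ⟨fun i j => P i j + P j i, fun i j => by ring⟩ e
      = (Fintype.card V : ℝ) / d := by
  have hP_inner : ∀ i j, P i j = ‖∑ k, conj (v i k) * v j k‖ ^ 2 / d := fun i j => by
    rw [hP, Fintype.sum_congr _ _ fun p => congrArg _ (hψ p), sum_conj_kron_mul_diagonal,
      norm_ofReal_inv_sqrt_mul_sq d.cast_nonneg]
  have hP_diag : ∀ i, P i i = 1 / d := fun i => by simp [hP_inner, hunit]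
  have hP_adj : ∀ i j, G.Adj i j → P i j = 0 := fun i j h => by simp [hP_inner, horth i j h]
  rw [G.sum_edgeFinset_lift_eq_zero _ fun i j h => by
      simp only [hP_adj i j h, hP_adj j i h.symm, add_zero],
    mul_zero, sub_zero]
  simp only [hP_diag, Finset.sum_const, Finset.card_univ, nsmul_eq_mul, mul_one_div]
end

section
/- (Theorem 3.) Let G = (V, E) be a finite simple graph with independence number α(G) < |V| and xi number Ξ(G), let d ≥ 1, let v : V → (Fin d → ℂ) be an orthonormal representation of G in ℂ^d, let ψ(k,l) = 1/√d if k = l and 0 otherwise, and set P(i,j) = |⟨v_i ⊗ v̄_j, ψ⟩|². Then for every real η ≥ 0, the detection-efficiency-scaled quantum value η² · [ Σ_{i ∈ V} P(i, i) − (1/(2·Ξ(G))) · Σ_{{i,j} ∈ E} (P(i, j) + P(j, i)) ] is strictly greater than α(G) if and only if η² > α(G)·d / |V|. -/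
open scoped Classical
open ComplexConjugate

/-! In the maximally entangled state `ψ = d^{-1/2} ∑ₖ |kk⟩` one has
`⟨v_i ⊗ v̄_j, ψ⟩ = d^{-1/2} ⟨v_i, v_j⟩`. Hence orthonormality makes every diagonal probability
`P(i,i)` equal to `1/d` and every edge probability vanish, so the Bell functional takes the value
`|V|/d`, and the scaled value `η² |V|/d` beats `α(G)` exactly when `η² > α(G) d / |V|`. -/

namespace GraphBell

theorem sum_conj_tensor_mul_diagonal {ι : Type*} [Fintype ι] [DecidableEq ι] (c : ℂ)
    (u w : ι → ℂ) :
    ∑ p : ι × ι, conj (u p.1 * conj (w p.2)) * (if p.1 = p.2 then c else 0)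
      = c * ∑ k, conj (u k) * w k := by
  simp only [Fintype.sum_prod_type, mul_ite, mul_zero, Finset.sum_ite_eq, Finset.mem_univ,
    if_true, Finset.mul_sum, map_mul, Complex.conj_conj]
  exact Finset.sum_congr rfl fun _ _ => by ring

theorem norm_one_div_sqrt_sq {d : ℝ} (hd : 0 ≤ d) :
    ‖((1 / Real.sqrt d : ℝ) : ℂ)‖ ^ 2 = 1 / d := by
  rw [Complex.norm_real, Real.norm_eq_abs, sq_abs, div_pow, one_pow, Real.sq_sqrt hd]

theorem sum_edgeFinset_eq_zero_of_adj {V M : Type*} [AddCommMonoid M] (G : SimpleGraph V)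
    [Fintype G.edgeSet] (g : Sym2 V → M) (hg : ∀ i j, G.Adj i j → g s(i, j) = 0) :
    ∑ e ∈ G.edgeFinset, g e = 0 := by
  refine Finset.sum_eq_zero fun e he => ?_
  induction e using Sym2.ind with
  | _ i j => exact hg i j (G.mem_edgeFinset.mp he)

theorem lt_mul_div_iff_mul_div_lt {a b N d : ℝ} (hN : 0 < N) (hd : 0 < d) :
    a < b * (N / d) ↔ a * d / N < b := by
  rw [div_lt_iff₀ hN, mul_div_assoc', lt_div_iff₀ hd]

end GraphBell

open GraphBell in
/-- Theorem 3: with detection efficiency `η`, the scaled quantum value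
of the graph Bell functional exceeds the LHV bound `α(G)` iff `η² > α(G)·d / |V|`. -/
theorem stmt_4 {V : Type*} [Fintype V] (G : SimpleGraph V)
    (hα : indepNum G < Fintype.card V)
    (d : ℕ) (hd : 1 ≤ d) (v : V → Fin d → ℂ)
    (hunit : ∀ i, ∑ k, conj (v i k) * v i k = 1)
    (horth : ∀ i j, G.Adj i j → ∑ k, conj (v i k) * v j k = 0)
    (ψ : Fin d × Fin d → ℂ)
    (hψ : ∀ p : Fin d × Fin d, ψ p = if p.1 = p.2 then ((1 / Real.sqrt d : ℝ) : ℂ) else 0)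
    (P : V → V → ℝ)
    (hP : ∀ i j, P i j =
      ‖∑ p : Fin d × Fin d, conj (v i p.1 * conj (v j p.2)) * ψ p‖ ^ 2)
    (η : ℝ) :
    η ^ 2 *
      (∑ i, P i i -
        (1 / (2 * (xiNum G : ℝ))) *
          ∑ e ∈ G.edgeFinset, Sym2.lift ⟨fun i j => P i j + P j i, fun i j => by ring⟩ e)
      > indepNum G
    ↔ η ^ 2 > (indepNum G : ℝ) * d / (Fintype.card V : ℝ) := by
  have hP_inner : ∀ i j, P i j = ‖((1 / Real.sqrt d : ℝ) : ℂ) * ∑ k, conj (v i k) * v j k‖ ^ 2 :=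
    fun i j => by rw [hP, ← sum_conj_tensor_mul_diagonal]; simp only [hψ]
  have hd0 : (0 : ℝ) < d := by exact_mod_cast hd
  have hN : (0 : ℝ) < Fintype.card V := by exact_mod_cast (Nat.zero_le _).trans_lt hα
  have hdiag : ∑ i, P i i = Fintype.card V * (1 / d) := by
    simp only [hP_inner, hunit, mul_one, norm_one_div_sqrt_sq hd0.le, Finset.sum_const,
      Finset.card_univ, nsmul_eq_mul]
  have hedges : ∑ e ∈ G.edgeFinset,
      Sym2.lift ⟨fun i j => P i j + P j i, fun i j => by ring⟩ e = 0 :=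
    sum_edgeFinset_eq_zero_of_adj G _ fun i j hij => by
      simp only [Sym2.lift_mk, hP_inner, horth i j hij, horth j i hij.symm, mul_zero, norm_zero]
      ring
  rw [hedges, hdiag, mul_zero, sub_zero, mul_one_div, gt_iff_lt, gt_iff_lt,
    lt_mul_div_iff_mul_div_lt hN hd0]
end

section
/- (Theorem 3b, critical visibility.) Let G = (V, E) be a finite simple graph with independence number α(G) < |V| and xi number Ξ(G), let d ≥ 1, let v : V → (Fin d → ℂ) be an orthonormal representation of G in ℂ^d, let ψ(k,l) = 1/√d if k = l and 0 otherwise, and set P(i,j) = |⟨v_i ⊗ v̄_j, ψ⟩|². For W ∈ [0, 1], define P_W(i, j) = W·P(i, j) + (1 − W)/d², and let I(W) = Σ_{i ∈ V} P_W(i, i) − (1/(2·Ξ(G))) · Σ_{{i,j} ∈ E} (P_W(i, j) + P_W(j, i)). Let Q_mix = (|V| − |E|/Ξ(G))/d². Then I(W) = W·(|V|/d) + (1 − W)·Q_mix, and if |V|/d > Q_mix, then I(W) > α(G) if and only if W > (α(G) − Q_mix)/((|V|/d) − Q_mix). -/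
open scoped Classical
open ComplexConjugate

/-!
On the maximally entangled state `⟨v_i ⊗ v̄_j, ψ⟩ = ⟨v_i, v_j⟩ / √d`, so `P(i,i) = 1/d` and
`P(i,j) = 0` along edges. Hence only the noise term survives on the edges, `I(W)` is affine in
`W` with `I(1) = |V|/d` and `I(0) = Q_mix`, and the threshold is where this line crosses `α(G)`.
-/

section MaximallyEntangled

variable {ι : Type*} [Fintype ι] [DecidableEq ι]

lemma sum_conj_tensor_mul_diag (u w : ι → ℂ) (c : ℂ) :
    ∑ p : ι × ι, conj (u p.1 * conj (w p.2)) * (if p.1 = p.2 then c else 0)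
      = (∑ k, conj (u k) * w k) * c := by
  rw [Fintype.sum_prod_type, Finset.sum_mul]
  refine Finset.sum_congr rfl fun k _ => ?_
  rw [Finset.sum_eq_single k (fun l _ hlk => by simp [hlk.symm]) (by simp)]
  simp

lemma norm_sq_sum_conj_tensor_mul_maxEntangled (u w : ι → ℂ) {d : ℝ} (hd : 0 ≤ d) :
    ‖∑ p : ι × ι, conj (u p.1 * conj (w p.2)) *
        (if p.1 = p.2 then ((1 / Real.sqrt d : ℝ) : ℂ) else 0)‖ ^ 2
      = ‖∑ k, conj (u k) * w k‖ ^ 2 / d := by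
  rw [sum_conj_tensor_mul_diag, norm_mul, mul_pow, Complex.norm_real, Real.norm_eq_abs,
    sq_abs, div_pow, one_pow, Real.sq_sqrt hd, mul_one_div]

end MaximallyEntangled

lemma SimpleGraph.sum_edgeFinset_lift_add_swap {V : Type*} [Fintype V] (G : SimpleGraph V)
    [DecidableRel G.Adj] (f : V → V → ℝ) (c : ℝ) (hf : ∀ i j, G.Adj i j → f i j + f j i = c) :
    ∑ e ∈ G.edgeFinset, Sym2.lift ⟨fun i j => f i j + f j i, fun _ _ => add_comm _ _⟩ e
      = G.edgeFinset.card * c := by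
  rw [Finset.sum_congr rfl fun e he => ?_, Finset.sum_const, nsmul_eq_mul]
  induction e using Sym2.ind with
  | _ i j => exact hf i j (SimpleGraph.mem_edgeFinset.mp he)

lemma lt_mul_add_one_sub_mul_iff {K : Type*} [Field K] [LinearOrder K] [IsStrictOrderedRing K]
    {a q x W : K} (hq : q < a) :
    x < W * a + (1 - W) * q ↔ (x - q) / (a - q) < W := by
  rw [div_lt_iff₀ (sub_pos.mpr hq)]
  constructor <;> intro h <;> linarith

/-- Theorem 3b, critical visibility: for the Werner-type noisy
probabilities `P_W(i,j) = W·P(i,j) + (1−W)/d²`, the Bell value satisfies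
`I(W) = W·(|V|/d) + (1−W)·Q_mix`, and, whenever `|V|/d > Q_mix`,
`I(W) > α(G) ↔ W > (α(G) − Q_mix)/((|V|/d) − Q_mix)`. -/
theorem stmt_5 {V : Type*} [Fintype V] (G : SimpleGraph V)
    (d : ℕ) (v : V → Fin d → ℂ)
    (hunit : ∀ i, ∑ k, conj (v i k) * v i k = 1)
    (horth : ∀ i j, G.Adj i j → ∑ k, conj (v i k) * v j k = 0)
    (ψ : Fin d × Fin d → ℂ)
    (hψ : ∀ p : Fin d × Fin d, ψ p = if p.1 = p.2 then ((1 / Real.sqrt d : ℝ) : ℂ) else 0)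
    (P : V → V → ℝ)
    (hP : ∀ i j, P i j =
      ‖∑ p : Fin d × Fin d, conj (v i p.1 * conj (v j p.2)) * ψ p‖ ^ 2)
    (W : ℝ)
    (PW : V → V → ℝ)
    (hPW : ∀ i j, PW i j = W * P i j + (1 - W) / (d : ℝ) ^ 2)
    (I : ℝ)
    (hI : I = ∑ i, PW i i -
      (1 / (2 * (xiNum G : ℝ))) *
        ∑ e ∈ G.edgeFinset, Sym2.lift ⟨fun i j => PW i j + PW j i, fun i j => by ring⟩ e)
    (Qmix : ℝ)
    (hQmix : Qmix = ((Fintype.card V : ℝ) - (G.edgeFinset.card : ℝ) / (xiNum G : ℝ)) / (d : ℝ) ^ 2) :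
    I = W * ((Fintype.card V : ℝ) / d) + (1 - W) * Qmix ∧
      ((Fintype.card V : ℝ) / d > Qmix →
        (I > indepNum G ↔ W > ((indepNum G : ℝ) - Qmix) / ((Fintype.card V : ℝ) / d - Qmix))) := by
  have hP_inner : ∀ i j, P i j = ‖∑ k, conj (v i k) * v j k‖ ^ 2 / d := fun i j => by
    simp only [hP, hψ, norm_sq_sum_conj_tensor_mul_maxEntangled _ _ d.cast_nonneg]
  have hPW_diag : ∀ i, PW i i = W / d + (1 - W) / (d : ℝ) ^ 2 := fun i => by
    rw [hPW, hP_inner, hunit]; simp [div_eq_mul_inv]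
  have hPW_adj : ∀ i j, G.Adj i j → PW i j + PW j i = 2 * (1 - W) / (d : ℝ) ^ 2 := by
    intro i j hij
    rw [hPW, hPW, hP_inner, hP_inner, horth i j hij, horth j i hij.symm, norm_zero]
    ring
  have hvalue : I = W * ((Fintype.card V : ℝ) / d) + (1 - W) * Qmix := by
    rw [hI, Finset.sum_congr rfl fun i _ => hPW_diag i,
      G.sum_edgeFinset_lift_add_swap PW _ hPW_adj, hQmix]
    simp only [Finset.sum_const, Finset.card_univ, nsmul_eq_mul]
    ring
  exact ⟨hvalue, fun hQ => hvalue ▸ lt_mul_add_one_sub_mul_iff hQ⟩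
end

section
/- (Resolution of the identity by Newman states.) Let n be a positive multiple of 4 and let N_n = {v ∈ {−1, 1}^n : v_1 = 1 and the number of indices i with v_i = −1 is even} (a set of representatives of the Newman states). Then |N_n| = 2^{n−2} and Σ_{v ∈ N_n} (1/n)·v·vᵀ = (2^{n−2}/n)·I_n, i.e., the rank-one projectors onto the normalized Newman states sum to (2^{n−2}/n) times the n×n identity matrix. -/
/-!
Flipping a coordinate other than the first toggles the parity of the number of `-1` entries,
so the Newman representatives are a quarter of `{±1}^n`. For `i ≠ j`, say `i` not the first
coordinate, pick `k` outside `{first, i, j}` (possible as `n ≥ 4`): flipping the two coordinates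
`i, k` preserves the Newman set and negates `v_i v_j`, so the off-diagonal entries of `Σ v vᵀ`
cancel in pairs, while the diagonal entries are `v_i² = 1`.
-/

open scoped Classical

/-- The ±1-vector in `ℝ^n` encoded by a Boolean pattern: entry `1` where `true`,
entry `-1` where `false`.  This identifies `Fin n → Bool` with `{−1,1}^n`. -/
def sgn {n : ℕ} (ε : Fin n → Bool) : Fin n → ℝ := fun i => if ε i then 1 else -1

open Finset
open scoped symmDiff

namespace Newman

lemma even_card_symmDiff_iff {α : Type*} [DecidableEq α] (s t : Finset α) :
    Even #(s ∆ t) ↔ (Even #s ↔ Even #t) := by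
  have hsplit : #(s ∆ t) + 2 * #(s ∩ t) = #s + #t := by
    rw [Finset.symmDiff_def, card_union_of_disjoint disjoint_sdiff_sdiff]
    have := card_sdiff_add_card_inter s t
    have := inter_comm t s ▸ card_sdiff_add_card_inter t s
    omega
  rw [← Nat.even_add, ← hsplit, Nat.even_add]
  simp

lemma two_mul_card_filter_of_involutive {α : Type*} (s : Finset α) (p : α → Prop)
    [DecidablePred p] {f : α → α} (hf : Function.Involutive f) (hs : ∀ x ∈ s, f x ∈ s)
    (hp : ∀ x ∈ s, p (f x) ↔ ¬ p x) :
    2 * #(s.filter p) = #s := by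
  have hswap : #(s.filter p) = #(s.filter (¬ p ·)) := by
    refine card_nbij' f f ?_ ?_ (fun x _ => hf x) (fun x _ => hf x) <;>
      intro x hx <;> simp only [coe_filter, Set.mem_ofPred_eq] at hx ⊢ <;>
      exact ⟨hs x hx.1, by simpa [hp x hx.1] using hx.2⟩
  rw [two_mul]
  nth_rewrite 2 [hswap]
  exact card_filter_add_card_filter_not p

section Flip

variable {ι : Type*} [DecidableEq ι]

def flipOn (s : Finset ι) (ε : ι → Bool) : ι → Bool := fun i => if i ∈ s then !ε i else ε i

lemma flipOn_apply_of_mem {s : Finset ι} {i : ι} (h : i ∈ s) (ε : ι → Bool) :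
    flipOn s ε i = !ε i := if_pos h

lemma flipOn_apply_of_notMem {s : Finset ι} {i : ι} (h : i ∉ s) (ε : ι → Bool) :
    flipOn s ε i = ε i := if_neg h

lemma flipOn_involutive (s : Finset ι) : Function.Involutive (flipOn s) := by
  intro ε; funext i; unfold flipOn; split_ifs <;> simp

lemma flipOn_ne_self {s : Finset ι} (hs : s.Nonempty) (ε : ι → Bool) : flipOn s ε ≠ ε := by
  obtain ⟨i, hi⟩ := hs
  intro h
  simpa [flipOn_apply_of_mem hi] using congrFun h i

lemma filter_flipOn_eq_false [Fintype ι] (s : Finset ι) (ε : ι → Bool) :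
    ({i | flipOn s ε i = false} : Finset ι) = ({i | ε i = false} : Finset ι) ∆ s := by
  ext i
  by_cases hi : i ∈ s <;> cases ε i <;> simp [flipOn, mem_symmDiff, hi]

lemma even_card_false_flipOn_iff [Fintype ι] (s : Finset ι) (ε : ι → Bool) :
    Even #{i | flipOn s ε i = false} ↔ (Even #{i | ε i = false} ↔ Even #s) := by
  rw [filter_flipOn_eq_false, even_card_symmDiff_iff]

end Flip

section Sign

variable {n : ℕ}

lemma sgn_eq_one_iff (ε : Fin n → Bool) (i : Fin n) : sgn ε i = 1 ↔ ε i = true := by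
  unfold sgn; cases ε i <;> norm_num

lemma sgn_eq_neg_one_iff (ε : Fin n → Bool) (i : Fin n) : sgn ε i = -1 ↔ ε i = false := by
  unfold sgn; cases ε i <;> norm_num

lemma sgn_mul_self (ε : Fin n → Bool) (i : Fin n) : sgn ε i * sgn ε i = 1 := by
  unfold sgn; cases ε i <;> norm_num

lemma sgn_flipOn_of_mem {s : Finset (Fin n)} {i : Fin n} (h : i ∈ s) (ε : Fin n → Bool) :
    sgn (flipOn s ε) i = -sgn ε i := by
  unfold sgn; rw [flipOn_apply_of_mem h]; cases ε i <;> norm_num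

lemma sgn_flipOn_of_notMem {s : Finset (Fin n)} {i : Fin n} (h : i ∉ s) (ε : Fin n → Bool) :
    sgn (flipOn s ε) i = sgn ε i := by
  unfold sgn; rw [flipOn_apply_of_notMem h]

lemma sum_sgn_mul_sgn_eq_zero {S : Finset (Fin n → Bool)} {s : Finset (Fin n)}
    (hs : s.Nonempty) (hS : ∀ ε ∈ S, flipOn s ε ∈ S) {i j : Fin n} (hij : i ∈ s ↔ j ∉ s) :
    ∑ ε ∈ S, sgn ε i * sgn ε j = 0 := by
  have hneg (ε : Fin n → Bool) :
      sgn (flipOn s ε) i * sgn (flipOn s ε) j = -(sgn ε i * sgn ε j) := by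
    by_cases hi : i ∈ s
    · rw [sgn_flipOn_of_mem hi, sgn_flipOn_of_notMem (hij.mp hi)]; ring
    · rw [sgn_flipOn_of_notMem hi, sgn_flipOn_of_mem (not_not.mp (mt hij.mpr hi))]; ring
  exact sum_involution (fun ε _ => flipOn s ε) (fun ε _ => by rw [hneg]; ring)
    (fun ε _ _ => flipOn_ne_self hs ε) hS (fun ε _ => flipOn_involutive s ε)

end Sign

section NewmanSet

variable {n : ℕ}

def newmanSet (i₀ : Fin n) : Finset (Fin n → Bool) :=
  {ε | ε i₀ = true ∧ Even #{i | ε i = false}}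

lemma flipOn_mem_newmanSet {i₀ : Fin n} {s : Finset (Fin n)} (hi₀ : i₀ ∉ s) (hs : Even #s)
    {ε : Fin n → Bool} (hε : ε ∈ newmanSet i₀) : flipOn s ε ∈ newmanSet i₀ := by
  simp only [newmanSet, mem_filter, mem_univ, true_and] at hε ⊢
  rw [flipOn_apply_of_notMem hi₀, even_card_false_flipOn_iff]
  exact ⟨hε.1, iff_of_true hε.2 hs⟩

lemma card_newmanSet (i₀ : Fin n) (hn : 2 ≤ n) : #(newmanSet i₀) = 2 ^ (n - 2) := by
  have : Nontrivial (Fin n) := Fin.nontrivial_iff_two_le.mpr hn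
  obtain ⟨i₁, hi₁⟩ := exists_ne i₀
  have hfirst : 2 * #{ε : Fin n → Bool | ε i₀ = true} = 2 ^ n := by
    rw [two_mul_card_filter_of_involutive _ _ (flipOn_involutive {i₀}) (fun _ _ => mem_univ _)]
    · simp
    · intro ε _; simp [flipOn_apply_of_mem (mem_singleton_self i₀)]
  have hparity : 2 * #(newmanSet i₀) = #{ε : Fin n → Bool | ε i₀ = true} := by
    rw [newmanSet, ← filter_filter]
    refine two_mul_card_filter_of_involutive _ _ (flipOn_involutive {i₁}) ?_ ?_ <;>
      intro ε hε <;> simp only [mem_filter, mem_univ, true_and] at hε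
    · simpa [flipOn_apply_of_notMem (notMem_singleton.mpr hi₁.symm)] using hε
    · simp [even_card_false_flipOn_iff]
  have : 2 ^ n = 4 * 2 ^ (n - 2) := by
    rw [show (4 : ℕ) = 2 ^ 2 by norm_num, ← pow_add]; congr 1; omega
  omega

lemma sum_sgn_mul_sgn_newmanSet (i₀ : Fin n) (hn : 4 ≤ n) {i j : Fin n} (hij : i ≠ j) :
    ∑ ε ∈ newmanSet i₀, sgn ε i * sgn ε j = 0 := by
  wlog hi : i ≠ i₀ generalizing i j
  · simp_rw [mul_comm (sgn _ i)]
    exact this hij.symm (by rintro rfl; exact hi hij)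
  obtain ⟨k, -, hk⟩ : ∃ k ∈ (univ : Finset (Fin n)), k ∉ ({i₀, i, j} : Finset (Fin n)) := by
    refine exists_mem_notMem_of_card_lt_card ?_
    calc #({i₀, i, j} : Finset (Fin n)) ≤ 3 := card_le_three
      _ < #(univ : Finset (Fin n)) := by rw [card_univ, Fintype.card_fin]; omega
  simp only [mem_insert, mem_singleton, not_or] at hk
  obtain ⟨hki₀, hki, hkj⟩ := hk
  refine sum_sgn_mul_sgn_eq_zero (s := {i, k}) (insert_nonempty _ _)
    (fun ε hε => flipOn_mem_newmanSet ?_ ?_ hε) ?_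
  · simp [hi.symm, Ne.symm hki₀]
  · simp [card_pair (Ne.symm hki)]
  · simp [hij.symm, Ne.symm hkj]

lemma sum_vecMulVec_sgn_newmanSet (i₀ : Fin n) (hn : 4 ≤ n) :
    ∑ ε ∈ newmanSet i₀, Matrix.vecMulVec (sgn ε) (sgn ε) = (2 ^ (n - 2) : ℝ) • 1 := by
  ext i j
  simp only [Matrix.sum_apply, Matrix.vecMulVec_apply, Matrix.smul_apply, Matrix.one_apply,
    smul_eq_mul]
  rcases eq_or_ne i j with rfl | hij
  · simp [sgn_mul_self, card_newmanSet i₀ (by omega)]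
  · simp [sum_sgn_mul_sgn_newmanSet i₀ hn hij, hij]

end NewmanSet

end Newman

open Newman in
/-- resolution of the identity by Newman states: for `n` a positive
multiple of `4` and `N_n` the set of `±1`-vectors with first coordinate `1` and an
even number of entries equal to `−1`, one has `|N_n| = 2^{n−2}` and
`Σ_{v ∈ N_n} (1/n)·v·vᵀ = (2^{n−2}/n)·I_n`. -/
theorem stmt_9 (n : ℕ) (hn : 0 < n) (h4 : 4 ∣ n) :
    (Finset.univ.filter
        (fun ε : Fin n → Bool => sgn ε ⟨0, hn⟩ = (1 : ℝ) ∧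
          Even (Finset.univ.filter fun i => sgn ε i = (-1 : ℝ)).card)).card
      = 2 ^ (n - 2) ∧
    (∑ ε ∈ Finset.univ.filter
        (fun ε : Fin n → Bool => sgn ε ⟨0, hn⟩ = (1 : ℝ) ∧
          Even (Finset.univ.filter fun i => sgn ε i = (-1 : ℝ)).card),
      ((1 : ℝ) / n) • Matrix.vecMulVec (sgn ε) (sgn ε))
      = ((2 ^ (n - 2) : ℝ) / n) • (1 : Matrix (Fin n) (Fin n) ℝ) := by
  have hn4 : 4 ≤ n := Nat.le_of_dvd hn h4
  have hset : Finset.univ.filter (fun ε : Fin n → Bool => sgn ε ⟨0, hn⟩ = (1 : ℝ) ∧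
      Even (Finset.univ.filter fun i => sgn ε i = (-1 : ℝ)).card) = newmanSet ⟨0, hn⟩ := by
    simp only [newmanSet, sgn_eq_one_iff, sgn_eq_neg_one_iff]
  rw [hset, ← Finset.smul_sum, sum_vecMulVec_sgn_newmanSet _ hn4, smul_smul]
  exact ⟨card_newmanSet _ (by omega), by rw [one_div_mul_eq_div]⟩
end
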